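/- arXiv:2203.15159 — 2 statements merged into one kernel-verified Lean document; each statement's English description precedes it below -/
import Mathlib

section
/- For any subshift Y in the space 𝐒 of all subshifts, the collection 𝐒(Y) of all subshifts contained in Y is a compact subset of 𝐒; moreover, if Y is a shift of finite type, then 𝐒(Y) is also open in 𝐒. -/
open Set Topology Filter

namespace Generic

/-- The shift map `σ` on `ℤ → ℤ`, `(σ x) i = x (i+1)`. -/
def shift : (ℤ → ℤ) → (ℤ → ℤ) := fun x i => x (i + 1)

/-- A subshift: a nonempty compact shift-invariant subset of `𝒜^ℤ`
for some finite alphabet `𝒜 ⊂ ℤ` (product topology, `ℤ` discrete). -/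
structure Subshift where
  carrier : Set (ℤ → ℤ)
  nonempty' : carrier.Nonempty
  finite_alphabet : ∃ A : Finset ℤ, ∀ x ∈ carrier, ∀ i : ℤ, x i ∈ A
  shift_invariant : shift '' carrier = carrier
  isCompact' : IsCompact carrier

/-- The finite word `w` occurs in the biinfinite sequence `x`. -/
def Occurs (w : List ℤ) (x : ℤ → ℤ) : Prop :=
  ∃ k : ℤ, ∀ i : Fin w.length, x (k + (i.1 : ℤ)) = w.get i

namespace Subshift

/-- `L_n(X)`: the set of `n`-letter words appearing in points of `X`. -/
def lang (X : Subshift) (n : ℕ) : Set (List ℤ) :=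
  {w | w.length = n ∧ ∃ x ∈ X.carrier, ∀ i : Fin w.length, x (i.1 : ℤ) = w.get i}

/-- The word complexity function `c_X(n) = |L_n(X)|`. -/
noncomputable def complexity (X : Subshift) (n : ℕ) : ℕ := (X.lang n).ncard

/-- `X` is a shift of finite type: for some finite alphabet `A` and finite set `F` of
forbidden words, `X` is the set of all points of `A^ℤ` containing no word of `F`. -/
def IsSFT (X : Subshift) : Prop :=
  ∃ (A : Finset ℤ) (F : Finset (List ℤ)),
    X.carrier = {x | (∀ i : ℤ, x i ∈ A) ∧ ∀ w ∈ F, ¬ Occurs w x}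

end Subshift

/-- The cylinder set `[X, n] = {Y : L_n(Y) = L_n(X)}`. -/
def cylinder (X : Subshift) (n : ℕ) : Set Subshift := {Y | Y.lang n = X.lang n}

/-- The topology of the space `𝐒` of all subshifts: generated by the cylinder sets `[X,n]`;
this is the topology of the metric `d(X,Y) = 2^{-inf{n : L_n(X) ≠ L_n(Y)}}`. -/
instance : TopologicalSpace Subshift :=
  TopologicalSpace.generateFrom {C | ∃ (X : Subshift) (n : ℕ), C = cylinder X n}

/-- A directed (multi)graph: edge set `E`, vertex set `V`, source and target maps. -/
structure Digraph (V : Type*) (E : Type*) where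
  src : E → V
  tgt : E → V

namespace Digraph

variable {V E : Type*}

/-- A cycle of length `k`, encoded as a map `ZMod k → E` with matching endpoints. -/
def IsCycle (G : Digraph V E) {k : ℕ} (c : ZMod k → E) : Prop :=
  0 < k ∧ ∀ i, G.tgt (c i) = G.src (c (i + 1))

/-- The vertex set of a cycle. -/
def cycleVerts (G : Digraph V E) {k : ℕ} (c : ZMod k → E) : Set V :=
  Set.range fun i => G.src (c i)

/-- The cycle `c` has an incoming edge: an edge whose terminal vertex is on the cycle
and whose initial vertex is not. -/
def HasIncoming (G : Digraph V E) {k : ℕ} (c : ZMod k → E) : Prop :=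
  ∃ f : E, G.tgt f ∈ G.cycleVerts c ∧ G.src f ∉ G.cycleVerts c

/-- The cycle `c` has an outgoing edge: an edge whose initial vertex is on the cycle
and whose terminal vertex is not. -/
def HasOutgoing (G : Digraph V E) {k : ℕ} (c : ZMod k → E) : Prop :=
  ∃ g : E, G.src g ∈ G.cycleVerts c ∧ G.tgt g ∉ G.cycleVerts c

/-- No middle cycles property: no cycle has both an incoming and an outgoing edge. -/
def NMC (G : Digraph V E) : Prop :=
  ¬ ∃ (k : ℕ) (c : ZMod k → E), G.IsCycle c ∧ G.HasIncoming c ∧ G.HasOutgoing c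

/-- A simple cycle: a cycle visiting no vertex twice. -/
def IsSimpleCycle (G : Digraph V E) {k : ℕ} (c : ZMod k → E) : Prop :=
  G.IsCycle c ∧ Function.Injective fun i => G.src (c i)

/-- One middle cycle property: there is a unique simple cycle having both an incoming
and an outgoing edge. -/
def OMC (G : Digraph V E) : Prop :=
  ∃ (k : ℕ) (c : ZMod k → E), G.IsSimpleCycle c ∧ G.HasIncoming c ∧ G.HasOutgoing c ∧
    ∀ (k' : ℕ) (c' : ZMod k' → E), G.IsSimpleCycle c' → G.HasIncoming c' → G.HasOutgoing c' →
      Set.range c' = Set.range c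

end Digraph

/-- The `n`-th Rauzy graph of `X`: vertices are the `(n-1)`-letter words of `L(X)`
(embedded in `List ℤ`), edges are the `n`-letter words `w ∈ L_n(X)`, with
`src w` the length-`(n-1)` prefix and `tgt w` the length-`(n-1)` suffix. -/
def rauzyGraph (X : Subshift) (n : ℕ) : Digraph (List ℤ) (X.lang n) :=
  ⟨fun w => w.1.dropLast, fun w => w.1.tail⟩

/-- `X` has the no middle cycles property. -/
def Subshift.IsNMC (X : Subshift) : Prop := ∃ n : ℕ, 1 ≤ n ∧ (rauzyGraph X n).NMC

/-- `X` has the one middle cycle property. -/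
def Subshift.IsOMC (X : Subshift) : Prop := ∃ n : ℕ, 1 ≤ n ∧ (rauzyGraph X n).OMC

/-- The set of NMC subshifts. -/
def NMCset : Set Subshift := {X | X.IsNMC}

/-- The set of OMC subshifts. -/
def OMCset : Set Subshift := {X | X.IsOMC}

/-- `𝐒'`: the complement of the set of NMC subshifts. -/
def Sprime : Set Subshift := NMCsetᶜ

/-- The shift of a point by `k`: `(σ^k x) i = x (i + k)`. -/
def shiftBy (k : ℤ) (x : ℤ → ℤ) : ℤ → ℤ := fun i => x (i + k)

/-- The orbit `{σ^k x : k ∈ ℤ}` of a point. -/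
def orbitOf (x : ℤ → ℤ) : Set (ℤ → ℤ) := {y | ∃ k : ℤ, y = shiftBy k x}

/-- `X` is (topologically) transitive: some point has dense orbit. -/
def Subshift.IsTransitive (X : Subshift) : Prop :=
  ∃ x ∈ X.carrier, X.carrier ⊆ closure (orbitOf x)

/-- `X` is totally transitive: for every `k ≥ 1` some point has dense `σ^k`-orbit. -/
def Subshift.IsTotallyTransitive (X : Subshift) : Prop :=
  ∀ k : ℕ, 1 ≤ k → ∃ x ∈ X.carrier,
    X.carrier ⊆ closure {y | ∃ m : ℤ, y = shiftBy (m * k) x}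

/-- `𝒯'`: the set of infinite transitive subshifts. -/
def Tprime : Set Subshift := {X | X.IsTransitive ∧ X.carrier.Infinite}

/-- `𝒯𝒯'`: the set of infinite totally transitive subshifts. -/
def TTprime : Set Subshift := {X | X.IsTotallyTransitive ∧ X.carrier.Infinite}

/-- `X` is minimal: every word of the language occurs in every point. -/
def Subshift.IsMinimal (X : Subshift) : Prop :=
  ∀ n : ℕ, ∀ w ∈ X.lang n, ∀ x ∈ X.carrier, Occurs w x

/-- `X` has a periodic point. -/
def Subshift.HasPeriodicPoint (X : Subshift) : Prop :=
  ∃ x ∈ X.carrier, ∃ k : ℕ, 1 ≤ k ∧ ∀ i : ℤ, x (i + k) = x i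

/-- `X` is topologically mixing. -/
def Subshift.IsMixing (X : Subshift) : Prop :=
  ∀ (nv nw : ℕ), ∀ v ∈ X.lang nv, ∀ w ∈ X.lang nw, ∃ N : ℕ, ∀ n : ℕ, N < n →
    ∃ x ∈ X.carrier, (∀ i : Fin v.length, x (i.1 : ℤ) = v.get i) ∧
      ∀ i : Fin w.length, x ((n : ℤ) + (i.1 : ℤ)) = w.get i

lemma Subshift.shift_mem (X : Subshift) {x : ℤ → ℤ} (hx : x ∈ X.carrier) :
    shift x ∈ X.carrier :=
  X.shift_invariant ▸ Set.mem_image_of_mem shift hx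

/-- The restriction of the shift map to `X`. -/
def Subshift.restrictShift (X : Subshift) : ↥X.carrier → ↥X.carrier :=
  fun x => ⟨shift x.1, X.shift_mem x.2⟩

/-- Topological conjugacy of subshifts. -/
def Conjugate (X Y : Subshift) : Prop :=
  ∃ φ : ↥X.carrier ≃ₜ ↥Y.carrier, ∀ x, φ (X.restrictShift x) = Y.restrictShift (φ x)

/-- `lam` is a topological eigenvalue of `(X, σ)`. -/
def Subshift.IsTopEigenvalue (X : Subshift) (lam : ℂ) : Prop :=
  ∃ f : ↥X.carrier → ℂ, Continuous f ∧ (∃ x, f x ≠ 0) ∧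
    ∀ x, f (X.restrictShift x) = lam * f x

/-- A regular Toeplitz sequence. -/
def IsRegularToeplitz (x : ℤ → ℤ) : Prop :=
  ∀ ε : ℝ, 0 < ε → ∃ n : ℕ, 0 < n ∧ ∃ S : Finset ℕ, S ⊆ Finset.range n ∧
    (1 - ε) * (n : ℝ) < (S.card : ℝ) ∧
    ∀ s ∈ S, ∀ i j : ℤ, x ((s : ℤ) + i * (n : ℤ)) = x ((s : ℤ) + j * (n : ℤ))

/-- A regular Toeplitz subshift: the orbit closure of a regular Toeplitz sequence. -/
def Subshift.IsRegularToeplitzSubshift (X : Subshift) : Prop :=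
  ∃ x : ℤ → ℤ, IsRegularToeplitz x ∧ X.carrier = closure (orbitOf x)

/-- `X` is the disjoint union of `σ^i E`, `0 ≤ i < n`, for some clopen `E`. -/
def Subshift.HasCyclicPartition (X : Subshift) (n : ℕ) : Prop :=
  ∃ E : Set ↥X.carrier, IsClopen E ∧
    (⋃ i ∈ Finset.range n, X.restrictShift^[i] '' E) = Set.univ ∧
    ∀ i j : ℕ, i < n → j < n → i ≠ j →
      Disjoint (X.restrictShift^[i] '' E) (X.restrictShift^[j] '' E)

/-- The biinfinite periodic point `p^∞` (with `p` occupying positions `[0, |p|)` and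
repeating in both directions). -/
def perPoint (p : List ℤ) : ℤ → ℤ :=
  fun i => p.getD (Int.emod i (p.length : ℤ)).toNat 0

/-- The point `p^∞ m s^∞`: a left-infinite repetition of `p` (ending at position `-1`),
then `m` on `[0, |m|)`, then a right-infinite repetition of `s`. -/
def barbellPoint (p m s : List ℤ) : ℤ → ℤ := fun i =>
  if i < 0 then perPoint p i
  else if i < (m.length : ℤ) then m.getD i.toNat 0
  else perPoint s (i - (m.length : ℤ))

/-- `𝐒(Y)`: the subshifts contained in `Y`. -/
def SubshiftsOf (Y : Subshift) : Set Subshift := {X | X.carrier ⊆ Y.carrier}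

/-- `τ(y)`: the biinfinite concatenation `⋯ t(y₋₁).t(y₀) t(y₁) ⋯` of blocks of length `ℓ`. -/
def tauPoint (t : ℤ → List ℤ) (ℓ : ℕ) (y : ℤ → ℤ) : ℤ → ℤ :=
  fun j => (t (y (Int.ediv j (ℓ : ℤ)))).getD (Int.emod j (ℓ : ℤ)).toNat 0

/-- `τ*(Y) = {σ^i τ(y) : y ∈ Y, 0 ≤ i < ℓ}`. -/
def tauStar (t : ℤ → List ℤ) (ℓ : ℕ) (Y : Subshift) : Set (ℤ → ℤ) :=
  {z | ∃ y ∈ Y.carrier, ∃ i : ℕ, i < ℓ ∧ z = fun j => tauPoint t ℓ y (j + (i : ℤ))}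

/-- `τ(v)` for a finite word `v`: the concatenation of the blocks. -/
def tauWord (t : ℤ → List ℤ) (v : List ℤ) : List ℤ := (v.map t).flatten

/-- The set of `σ`-orbits of `X`. -/
def Subshift.orbitSet (X : Subshift) : Set (Set (ℤ → ℤ)) :=
  {O | ∃ x ∈ X.carrier, O = orbitOf x}

/-! Each `L_n(X)` with `X ⊆ Y` is one of the finitely many subsets of `L_n(Y)`. Hence an
ultrafilter on `𝐒(Y)` eventually fixes every `L_n`, and the sequence `(W_n)` it fixes is the
language of the subshift of points all of whose `n`-windows lie in `W_n`: every word of `W_n`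
occurs in such a point by Cantor's intersection theorem in the compact set `Y`. If `Y` is defined
by forbidden words of length at most `N`, membership in `Y` is decided by the `N`-windows of a
point, so the cylinder `[X, N]` of any `X ∈ 𝐒(Y)` lies in `𝐒(Y)`. -/

lemma shiftBy_shiftBy (a b : ℤ) (x : ℤ → ℤ) : shiftBy a (shiftBy b x) = shiftBy (a + b) x := by
  funext i
  simp only [shiftBy, add_assoc]

lemma shiftBy_zero (x : ℤ → ℤ) : shiftBy 0 x = x := by
  funext i
  simp only [shiftBy, add_zero]

lemma shift_eq_shiftBy_one : shift = shiftBy 1 := rfl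

lemma shift_image_eq_of_forall_shiftBy_mem {C : Set (ℤ → ℤ)}
    (hC : ∀ a : ℤ, ∀ x ∈ C, shiftBy a x ∈ C) : shift '' C = C := by
  refine Subset.antisymm (image_subset_iff.mpr fun x hx => hC 1 x hx) fun x hx => ?_
  refine ⟨shiftBy (-1) x, hC (-1) x hx, ?_⟩
  rw [shift_eq_shiftBy_one, shiftBy_shiftBy, add_neg_cancel, shiftBy_zero]

lemma Subshift.shiftBy_mem (X : Subshift) (k : ℤ) {x : ℤ → ℤ} (hx : x ∈ X.carrier) :
    shiftBy k x ∈ X.carrier := by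
  induction k using Int.induction_on with
  | zero => rwa [shiftBy_zero]
  | succ k ih =>
    rw [add_comm, ← shiftBy_shiftBy, ← shift_eq_shiftBy_one]
    exact X.shift_mem ih
  | pred k ih =>
    rw [← X.shift_invariant] at ih
    obtain ⟨y, hy, hyx⟩ := ih
    rwa [sub_eq_neg_add, ← shiftBy_shiftBy, ← hyx, shift_eq_shiftBy_one, shiftBy_shiftBy,
      neg_add_cancel, shiftBy_zero]

def window (x : ℤ → ℤ) (k : ℤ) (n : ℕ) : List ℤ := List.ofFn fun i : Fin n => x (k + i)

lemma window_eq_window_iff {x y : ℤ → ℤ} {k : ℤ} {n : ℕ} :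
    window x k n = window y k n ↔ ∀ i : Fin n, x (k + i) = y (k + i) := by
  simp only [window, List.ofFn_inj, funext_iff]

lemma window_shiftBy (x : ℤ → ℤ) (a k : ℤ) (n : ℕ) :
    window (shiftBy a x) k n = window x (k + a) n := by
  simp only [window, shiftBy, add_right_comm]

lemma window_zero_eq_iff {x : ℤ → ℤ} {n : ℕ} {w : List ℤ} :
    window x 0 n = w ↔ w.length = n ∧ ∀ i : Fin w.length, x (i : ℤ) = w.get i := by
  constructor
  · rintro rfl
    exact ⟨List.length_ofFn, fun i => by rw [List.get_eq_getElem]; simp [window]⟩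
  · rintro ⟨rfl, hw⟩
    exact List.ext_get List.length_ofFn fun i _ h => by simpa [window] using hw ⟨i, h⟩

lemma Subshift.mem_lang_iff (X : Subshift) (k : ℤ) {n : ℕ} {w : List ℤ} :
    w ∈ X.lang n ↔ ∃ x ∈ X.carrier, window x k n = w := by
  have mem_iff_zero : w ∈ X.lang n ↔ ∃ x ∈ X.carrier, window x 0 n = w := by
    simp only [window_zero_eq_iff]
    exact ⟨fun ⟨hl, x, hx, h⟩ => ⟨x, hx, hl, h⟩, fun ⟨x, hx, hl, h⟩ => ⟨hl, x, hx, h⟩⟩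
  rw [mem_iff_zero]
  constructor
  · rintro ⟨x, hx, rfl⟩
    exact ⟨shiftBy (-k) x, X.shiftBy_mem _ hx, by rw [window_shiftBy, add_neg_cancel]⟩
  · rintro ⟨x, hx, rfl⟩
    exact ⟨shiftBy k x, X.shiftBy_mem _ hx, by rw [window_shiftBy, zero_add]⟩

lemma Subshift.window_mem_lang (X : Subshift) {x : ℤ → ℤ} (hx : x ∈ X.carrier) (k : ℤ)
    (n : ℕ) : window x k n ∈ X.lang n :=
  (X.mem_lang_iff k).mpr ⟨x, hx, rfl⟩

lemma Subshift.lang_mono {X Y : Subshift} (h : X.carrier ⊆ Y.carrier) (n : ℕ) :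
    X.lang n ⊆ Y.lang n := fun _ ⟨hl, x, hx, hm⟩ => ⟨hl, x, h hx, hm⟩

lemma Subshift.lang_finite (X : Subshift) (n : ℕ) : (X.lang n).Finite := by
  obtain ⟨A, hA⟩ := X.finite_alphabet
  refine ((Set.Finite.pi fun _ : Fin n => A.finite_toSet).image List.ofFn).subset ?_
  rintro w hw
  obtain ⟨x, hx, rfl⟩ := (X.mem_lang_iff 0).mp hw
  exact ⟨_, fun i _ => hA x hx _, rfl⟩

lemma isClosed_setOf_window_mem (k : ℤ) (n : ℕ) (V : Set (List ℤ)) :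
    IsClosed {x : ℤ → ℤ | window x k n ∈ V} :=
  IsClosed.preimage (f := fun x : ℤ → ℤ => fun i : Fin n => x (k + i))
    (continuous_pi fun _ => continuous_apply _) (isClosed_discrete {f | List.ofFn f ∈ V})

lemma Subshift.mem_of_forall_window_mem_lang (Y : Subshift) {x : ℤ → ℤ}
    (h : ∀ (n : ℕ) (k : ℤ), window x k n ∈ Y.lang n) : x ∈ Y.carrier := by
  have approx : ∀ N : ℕ, ∃ y ∈ Y.carrier, ∀ i : ℤ, |i| ≤ N → y i = x i := by
    intro N
    obtain ⟨y, hy, hyx⟩ := (Y.mem_lang_iff (-N)).mp (h (2 * N + 1) (-N))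
    refine ⟨y, hy, fun i hi => ?_⟩
    have hi' := abs_le.mp hi
    have := window_eq_window_iff.mp hyx ⟨(i + N).toNat, by omega⟩
    simpa [Int.toNat_of_nonneg (by omega : 0 ≤ i + N)] using this
  choose y hy hyx using approx
  refine Y.isCompact'.isClosed.mem_of_tendsto (b := atTop) (tendsto_pi_nhds.mpr fun i => ?_)
    (Eventually.of_forall hy)
  refine tendsto_const_nhds.congr' ?_
  filter_upwards [eventually_ge_atTop i.natAbs] with N hN
  exact (hyx N i (by rw [Int.abs_eq_natAbs]; exact_mod_cast hN)).symm

/-- If `W` is the language of a subshift, this set is that subshift. -/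
def pointsWithWindowsIn (W : ℕ → Set (List ℤ)) : Set (ℤ → ℤ) :=
  {x | ∀ (n : ℕ) (k : ℤ), window x k n ∈ W n}

lemma isClosed_pointsWithWindowsIn (W : ℕ → Set (List ℤ)) :
    IsClosed (pointsWithWindowsIn W) := by
  simp only [pointsWithWindowsIn, ofPred_forall]
  exact isClosed_iInter fun n => isClosed_iInter fun k => isClosed_setOf_window_mem k n (W n)

lemma shiftBy_mem_pointsWithWindowsIn {W : ℕ → Set (List ℤ)} (a : ℤ) {x : ℤ → ℤ}
    (hx : x ∈ pointsWithWindowsIn W) : shiftBy a x ∈ pointsWithWindowsIn W := fun n k => by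
  rw [window_shiftBy]
  exact hx n (k + a)

section LimitSubshift

variable {Y : Subshift} {W : ℕ → Set (List ℤ)}

def IsLangLimit (Y : Subshift) (W : ℕ → Set (List ℤ)) : Prop :=
  ∀ N : ℕ, ∃ Z ∈ SubshiftsOf Y, ∀ j ≤ N, Z.lang j = W j

lemma IsLangLimit.subset_lang (hW : IsLangLimit Y W) (n : ℕ) : W n ⊆ Y.lang n := by
  obtain ⟨Z, hZY, hZ⟩ := hW n
  exact hZ n le_rfl ▸ Subshift.lang_mono hZY n

lemma IsLangLimit.exists_window_eq (hW : IsLangLimit Y W) {n : ℕ} {w : List ℤ}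
    (hw : w ∈ W n) : ∃ z ∈ pointsWithWindowsIn W, window z 0 n = w := by
  let K : ℕ → Set (ℤ → ℤ) := fun m =>
    Y.carrier ∩ {z | window z 0 n = w} ∩ {z | ∀ j ≤ m, ∀ k : ℤ, window z k j ∈ W j}
  have hK_closed (m : ℕ) : IsClosed (K m) := by
    refine (Y.isCompact'.isClosed.inter (isClosed_setOf_window_mem 0 n {w})).inter ?_
    simp only [ofPred_forall]
    exact isClosed_iInter fun j => isClosed_iInter fun _ =>
      isClosed_iInter fun k => isClosed_setOf_window_mem k j (W j)
  have hK_nonempty (m : ℕ) : (K m).Nonempty := by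
    obtain ⟨Z, hZY, hZ⟩ := hW (n + m)
    obtain ⟨z, hz, hzw⟩ := (Z.mem_lang_iff 0).mp (hZ n (by omega) ▸ hw)
    exact ⟨z, ⟨hZY hz, hzw⟩, fun j hj k => hZ j (by omega) ▸ Z.window_mem_lang hz k j⟩
  obtain ⟨z, hz⟩ := IsCompact.nonempty_iInter_of_sequence_nonempty_isCompact_isClosed K
    (fun m => inter_subset_inter_right _ fun z hz j hj => hz j (by omega)) hK_nonempty
    (Y.isCompact'.of_isClosed_subset (hK_closed 0) fun z hz => hz.1.1) hK_closed
  rw [mem_iInter] at hz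
  exact ⟨z, fun j k => (hz j).2 j le_rfl k, (hz 0).1.2⟩

theorem IsLangLimit.exists_subshift_lang_eq (hW : IsLangLimit Y W) :
    ∃ X ∈ SubshiftsOf Y, ∀ n, X.lang n = W n := by
  have hWY : pointsWithWindowsIn W ⊆ Y.carrier := fun x hx =>
    Y.mem_of_forall_window_mem_lang fun n k => hW.subset_lang n (hx n k)
  obtain ⟨A, hA⟩ := Y.finite_alphabet
  have hne : (pointsWithWindowsIn W).Nonempty := by
    obtain ⟨Z, -, hZ⟩ := hW 0
    obtain ⟨z, hz⟩ := Z.nonempty'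
    obtain ⟨x, hx, -⟩ := hW.exists_window_eq (hZ 0 le_rfl ▸ Z.window_mem_lang hz 0 0)
    exact ⟨x, hx⟩
  let X : Subshift :=
    { carrier := pointsWithWindowsIn W
      nonempty' := hne
      finite_alphabet := ⟨A, fun x hx => hA x (hWY hx)⟩
      shift_invariant := shift_image_eq_of_forall_shiftBy_mem fun a _ =>
        shiftBy_mem_pointsWithWindowsIn a
      isCompact' := Y.isCompact'.of_isClosed_subset (isClosed_pointsWithWindowsIn W) hWY }
  refine ⟨X, hWY, fun n => Subset.antisymm (fun w hw => ?_) fun w hw => ?_⟩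
  · obtain ⟨x, hx, rfl⟩ := (X.mem_lang_iff 0).mp hw
    exact hx n 0
  · obtain ⟨z, hz, rfl⟩ := hW.exists_window_eq hw
    exact X.window_mem_lang hz 0 n

end LimitSubshift

lemma isOpen_cylinder (X : Subshift) (n : ℕ) : IsOpen (cylinder X n) :=
  TopologicalSpace.isOpen_generateFrom_of_mem ⟨X, n, rfl⟩

lemma le_nhds_of_eventually_lang_eq {f : Filter Subshift} {X : Subshift}
    (h : ∀ n, ∀ᶠ Z in f, Z.lang n = X.lang n) : f ≤ 𝓝 X := by
  refine TopologicalSpace.tendsto_nhds_generateFrom_iff.mpr ?_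
  rintro _ ⟨X', n, rfl⟩ hX
  have hXX' : X.lang n = X'.lang n := hX
  rw [cylinder, ← hXX']
  exact h n

lemma exists_eventually_lang_eq {Y : Subshift} {f : Ultrafilter Subshift}
    (hf : SubshiftsOf Y ∈ f) (n : ℕ) : ∃ V, ∀ᶠ Z in (f : Filter Subshift), Z.lang n = V := by
  have hcover : SubshiftsOf Y ⊆ ⋃ V ∈ 𝒫 Y.lang n, {Z : Subshift | Z.lang n = V} :=
    fun Z hZ => mem_biUnion (Subshift.lang_mono hZ n) rfl
  obtain ⟨V, -, hV⟩ := (Ultrafilter.finite_biUnion_mem_iff (Y.lang_finite n).powerset).mp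
    (f.mem_of_superset hf hcover)
  exact ⟨V, hV⟩

theorem isCompact_subshiftsOf (Y : Subshift) : IsCompact (SubshiftsOf Y) := by
  refine isCompact_iff_ultrafilter_le_nhds.mpr fun f hf => ?_
  have hfY : SubshiftsOf Y ∈ f := le_principal_iff.mp hf
  choose W hW using exists_eventually_lang_eq hfY
  have hfY' : ∀ᶠ Z in (f : Filter Subshift), Z ∈ SubshiftsOf Y := hfY
  have hlim : IsLangLimit Y W := fun N =>
    (hfY'.and ((eventually_all_finite (finite_Iic N)).mpr fun j _ => hW j)).exists
  obtain ⟨X, hXY, hXW⟩ := hlim.exists_subshift_lang_eq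
  exact ⟨X, hXY, le_nhds_of_eventually_lang_eq fun n => hXW n ▸ hW n⟩

lemma Subshift.IsSFT.exists_mem_of_forall_window_mem_lang {Y : Subshift} (hY : Y.IsSFT) :
    ∃ N : ℕ, ∀ x : ℤ → ℤ, (∀ k : ℤ, window x k N ∈ Y.lang N) → x ∈ Y.carrier := by
  obtain ⟨A, F, hYAF⟩ := hY
  refine ⟨max 1 (F.sup List.length), fun x hx => ?_⟩
  have agree (k : ℤ) : ∃ y ∈ Y.carrier, ∀ i : ℕ, i < max 1 (F.sup List.length) →
      y (k + i) = x (k + i) := by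
    obtain ⟨y, hy, hyx⟩ := (Y.mem_lang_iff k).mp (hx k)
    exact ⟨y, hy, fun i hi => window_eq_window_iff.mp hyx ⟨i, hi⟩⟩
  rw [hYAF]
  refine ⟨fun k => ?_, fun w hwF ⟨k, hk⟩ => ?_⟩
  · obtain ⟨y, hy, hyx⟩ := agree k
    rw [hYAF] at hy
    have hyx0 := hyx 0 (by omega)
    rw [Nat.cast_zero, add_zero] at hyx0
    exact hyx0 ▸ hy.1 k
  · obtain ⟨y, hy, hyx⟩ := agree k
    rw [hYAF] at hy
    have hlen : w.length ≤ F.sup List.length := Finset.le_sup hwF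
    exact hy.2 w hwF ⟨k, fun i => (hyx i (by omega)).trans (hk i)⟩

theorem Subshift.IsSFT.isOpen_subshiftsOf {Y : Subshift} (hY : Y.IsSFT) :
    IsOpen (SubshiftsOf Y) := by
  obtain ⟨N, hN⟩ := hY.exists_mem_of_forall_window_mem_lang
  refine isOpen_iff_forall_mem_open.mpr fun X hXY => ⟨cylinder X N, ?_, isOpen_cylinder X N, rfl⟩
  intro Z hZX z hz
  exact hN z fun k => Subshift.lang_mono hXY N (hZX ▸ Z.window_mem_lang hz k N)

/-- For any subshift `Y` in the space `𝐒` of all subshifts, the collection `𝐒(Y)` of all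
subshifts contained in `Y` is a compact subset of `𝐒`; moreover, if `Y` is a shift of
finite type, then `𝐒(Y)` is also open in `𝐒`. -/
theorem subshiftsOf_isCompact_and_isOpen_of_isSFT (Y : Subshift) :
    IsCompact (SubshiftsOf Y) ∧ (Y.IsSFT → IsOpen (SubshiftsOf Y)) :=
  ⟨isCompact_subshiftsOf Y, Subshift.IsSFT.isOpen_subshiftsOf⟩

end Generic
end

section
/- For any functions f, g : ℕ → ℝ⁺, the set 𝐒_{f,g} of subshifts X such that f(n) ≤ c_X(n) ≤ g(n) holds for infinitely many n is a Gδ subset of the space 𝐒 of all subshifts. -/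
open Set Topology Filter

namespace Generic

/-- For any functions `f, g : ℕ → ℝ⁺`, the set `𝐒_{f,g}` of subshifts `X` such that
`f n ≤ c_X(n) ≤ g n` for infinitely many `n` is a Gδ subset of the space of all subshifts. -/
theorem isGδ_complexity_between_infinitely_often (f g : ℕ → ℝ)
    (hf : ∀ n, 0 < f n) (hg : ∀ n, 0 < g n) :
    IsGδ {X : Subshift | ∀ N : ℕ, ∃ n : ℕ, N < n ∧
      f n ≤ (X.complexity n : ℝ) ∧ (X.complexity n : ℝ) ≤ g n} := by
  have hopen : ∀ n : ℕ, IsOpen {X : Subshift |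
      f n ≤ (X.complexity n : ℝ) ∧ (X.complexity n : ℝ) ≤ g n} := by
    intro n
    have heq : {X : Subshift | f n ≤ (X.complexity n : ℝ) ∧ (X.complexity n : ℝ) ≤ g n}
        = ⋃ X ∈ {X : Subshift | f n ≤ (X.complexity n : ℝ) ∧ (X.complexity n : ℝ) ≤ g n},
            cylinder X n := by
      ext Y
      constructor
      · intro hY
        exact Set.mem_biUnion hY (by simp [cylinder])
      · rintro ⟨S, ⟨X, rfl⟩, hS⟩
        simp only [Set.mem_iUnion, Set.mem_setOf_eq] at hS
        obtain ⟨hX, hYX⟩ := hS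
        have : Y.complexity n = X.complexity n := by
          unfold Subshift.complexity
          rw [show Y.lang n = X.lang n from hYX]
        simpa [this] using hX
    rw [heq]
    exact isOpen_biUnion fun X _ =>
      TopologicalSpace.GenerateOpen.basic _ ⟨X, n, rfl⟩
  have hset : {X : Subshift | ∀ N : ℕ, ∃ n : ℕ, N < n ∧
      f n ≤ (X.complexity n : ℝ) ∧ (X.complexity n : ℝ) ≤ g n}
      = ⋂ N : ℕ, ⋃ n : ℕ, ⋃ _ : N < n,
        {X : Subshift | f n ≤ (X.complexity n : ℝ) ∧ (X.complexity n : ℝ) ≤ g n} := by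
    ext X
    simp only [Set.mem_setOf_eq, Set.mem_iInter, Set.mem_iUnion, exists_prop]
  rw [hset]
  exact .iInter fun N => ((isOpen_iUnion fun n => isOpen_iUnion fun _ => hopen n).isGδ)

end Generic
end
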